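/- Let (E,‖·‖) be an RN module over ℝ with base (Ω,𝓕,P) such that E has the countable concatenation property, k ∈ L⁰₊₊(𝓕), f ∈ E*, and G an L⁰(𝓕)-convex subset of E with the countable concatenation property. If x₀ ∈ G satisfies G ∩ (K(f,k) + x₀) = {x₀}, then there exists g ∈ E* such that ⋁g(G) = g(x₀) and ‖f − g‖* ≤ k. -/

import Mathlib

open MeasureTheory ENNReal Set Filter

namespace GYY

variable {Ω : Type*} [MeasurableSpace Ω]

/-- `L⁰(𝓕)`: equivalence classes of real-valued random variables on `(Ω,𝓕,P)`. -/
abbrev L0 (P : Measure Ω) := Ω →ₘ[P] ℝ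

/-- `L̄⁰(𝓕)`: equivalence classes of extended-real-valued random variables. -/
abbrev L0e (P : Measure Ω) := Ω →ₘ[P] EReal

/-- `L⁰₊₊(𝓕)`: the (classes of) random variables that are strictly positive a.s. -/
def L0pp (P : Measure Ω) : Set (L0 P) := {ε | ∀ᵐ ω ∂P, 0 < ε ω}

/-- The equivalence class `Ĩ_A` of the indicator function of a measurable set `A`. -/
noncomputable def indL0 (P : Measure Ω) (A : Set Ω) (hA : MeasurableSet A) : L0 P :=
  AEEqFun.mk (A.indicator fun _ => (1 : ℝ)) (aestronglyMeasurable_const.indicator hA)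

/-- A random metric space (RM space) with base `(Ω,𝓕,P)`. -/
structure RMSpace (P : Measure Ω) (E : Type*) where
  d : E → E → L0 P
  d_nonneg : ∀ p q, ∀ᵐ ω ∂P, 0 ≤ d p q ω
  d_eq_zero_iff : ∀ p q, d p q = 0 ↔ p = q
  d_symm : ∀ p q, d p q = d q p
  d_triangle : ∀ p q r, ∀ᵐ ω ∂P, d p r ω ≤ d p q ω + d q r ω

/-- Convergence in probability `P` of a sequence in `L⁰(𝓕)`, i.e. convergence in the
`(ε,λ)`-topology of `L⁰(𝓕)` with the random metric `d(p,q) = |p - q|`. -/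
def TendstoProb (P : Measure Ω) (r : ℕ → L0 P) (s : L0 P) : Prop :=
  ∀ ε : ℝ, 0 < ε → ∀ lam ∈ Ioo (0 : ℝ) 1, ∃ N : ℕ, ∀ n ≥ N,
    ENNReal.ofReal (1 - lam) < P {ω | |r n ω - s ω| < ε}

namespace RMSpace

variable {P : Measure Ω} {E : Type*} (M : RMSpace P E)

/-- Convergence of a sequence in the `(ε,λ)`-topology of an RM space. -/
def TendstoEL (x : ℕ → E) (a : E) : Prop :=
  ∀ ε : ℝ, 0 < ε → ∀ lam ∈ Ioo (0 : ℝ) 1, ∃ N : ℕ, ∀ n ≥ N,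
    ENNReal.ofReal (1 - lam) < P {ω | M.d (x n) a ω < ε}

/-- Cauchy sequence for the `d_{ε,λ}`-uniformity of an RM space. -/
def CauchySeqEL (x : ℕ → E) : Prop :=
  ∀ ε : ℝ, 0 < ε → ∀ lam ∈ Ioo (0 : ℝ) 1, ∃ N : ℕ, ∀ m ≥ N, ∀ n ≥ N,
    ENNReal.ofReal (1 - lam) < P {ω | M.d (x m) (x n) ω < ε}

/-- `d_{ε,λ}`-completeness of an RM space (the `d_{ε,λ}`-uniformity is metrizable, hence
completeness is equivalent to sequential completeness). -/
def CompleteEL : Prop := ∀ x : ℕ → E, M.CauchySeqEL x → ∃ a, M.TendstoEL x a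

/-- `φ : E → L̄⁰(𝓕)` is `𝒯_{ε,λ}`-lower semicontinuous: its epigraph
`epi(φ) = {(x,r) ∈ E × L⁰ : φ(x) ≤ r}` is closed in
`(E,𝒯_{ε,λ}) × (L⁰(𝓕),𝒯_{ε,λ})` (sequentially; both topologies are metrizable). -/
def LscEL (φ : E → L0e P) : Prop :=
  ∀ (x : ℕ → E) (r : ℕ → L0 P) (a : E) (s : L0 P),
    (∀ n, ∀ᵐ ω ∂P, φ (x n) ω ≤ (r n ω : EReal)) →
    M.TendstoEL x a → TendstoProb P r s →
    ∀ᵐ ω ∂P, φ a ω ≤ (s ω : EReal)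

end RMSpace

/-- `φ` is proper on `G`: `φ(x) > -∞` a.s. for every `x ∈ G`, and `φ(x) < +∞` a.s.
for some `x ∈ G`. -/
def ProperOn {E : Type*} {P : Measure Ω} (φ : E → L0e P) (G : Set E) : Prop :=
  (∀ x ∈ G, ∀ᵐ ω ∂P, ⊥ < φ x ω) ∧ ∃ x ∈ G, ∀ᵐ ω ∂P, φ x ω < ⊤

/-- `φ` is bounded from below on `G` by an element of `L⁰(𝓕)`. -/
def BddBelowOn {E : Type*} {P : Measure Ω} (φ : E → L0e P) (G : Set E) : Prop :=
  ∃ ξ : L0 P, ∀ x ∈ G, ∀ᵐ ω ∂P, (ξ ω : EReal) ≤ φ x ω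

/-- `φ` is bounded from above on `G` by an element of `L⁰(𝓕)`. -/
def BddAboveOn {E : Type*} {P : Measure Ω} (φ : E → L0e P) (G : Set E) : Prop :=
  ∃ ξ : L0 P, ∀ x ∈ G, ∀ᵐ ω ∂P, φ x ω ≤ (ξ ω : EReal)

/-- `η = ⋀ φ(G)`, the infimum of `φ(G)` in the complete lattice `L̄⁰(𝓕)`. -/
def IsInfOn {E : Type*} {P : Measure Ω} (φ : E → L0e P) (G : Set E) (η : L0e P) : Prop :=
  (∀ x ∈ G, ∀ᵐ ω ∂P, η ω ≤ φ x ω) ∧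
    ∀ ζ : L0e P, (∀ x ∈ G, ∀ᵐ ω ∂P, ζ ω ≤ φ x ω) → ∀ᵐ ω ∂P, ζ ω ≤ η ω

/-- `η = ⋁ φ(G)`, the supremum of `φ(G)` in the complete lattice `L̄⁰(𝓕)`. -/
def IsSupOn {E : Type*} {P : Measure Ω} (φ : E → L0e P) (G : Set E) (η : L0e P) : Prop :=
  (∀ x ∈ G, ∀ᵐ ω ∂P, φ x ω ≤ η ω) ∧
    ∀ ζ : L0e P, (∀ x ∈ G, ∀ᵐ ω ∂P, φ x ω ≤ ζ ω) → ∀ᵐ ω ∂P, η ω ≤ ζ ω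

/-- `s = ⋁ g(G)` for an `L⁰(𝓕)`-valued function `g`. -/
def IsSupOnR {E : Type*} {P : Measure Ω} (g : E → L0 P) (G : Set E) (s : L0 P) : Prop :=
  (∀ x ∈ G, ∀ᵐ ω ∂P, g x ω ≤ s ω) ∧
    ∀ c : L0 P, (∀ x ∈ G, ∀ᵐ ω ∂P, g x ω ≤ c ω) → ∀ᵐ ω ∂P, s ω ≤ c ω

/-- The Cauchy property (for the `d_{ε,λ}`-uniformity of `L⁰(𝓕)`, i.e. the uniformity of
convergence in probability) of the net `{φ(m) : m ∈ M}` indexed by `M` directed by the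
order of `X`. -/
def CauchyNetProb {X : Type*} [Preorder X] {P : Measure Ω} (φ : X → L0e P) (M : Set X) : Prop :=
  ∀ ε : ℝ, 0 < ε → ∀ lam ∈ Ioo (0 : ℝ) 1, ∃ m₀ ∈ M, ∀ m₁ ∈ M, ∀ m₂ ∈ M,
    m₀ ≤ m₁ → m₀ ≤ m₂ →
      ENNReal.ofReal (1 - lam) < P {ω | |(φ m₁ ω).toReal - (φ m₂ ω).toReal| < ε}

/-- The section filter of the net `{x_g : g ∈ G}`, `x_g = g`, indexed by `G` directed by the
order of `X`; the net is Cauchy iff this filter is a Cauchy filter. -/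
def netFilter {X : Type*} [Preorder X] (G : Set X) : Filter X :=
  ⨅ g ∈ G, 𝓟 {y | y ∈ G ∧ g ≤ y}

/-- A random normed module (RN module) over `ℝ` with base `(Ω,𝓕,P)`: a left module `E`
over the algebra `L⁰(𝓕)` together with an `L⁰`-norm. -/
structure RNModule (P : Measure Ω) (E : Type*) [AddCommGroup E] where
  smul : L0 P → E → E
  one_smul : ∀ x, smul 1 x = x
  mul_smul : ∀ ξ η x, smul (ξ * η) x = smul ξ (smul η x)
  smul_add : ∀ ξ x y, smul ξ (x + y) = smul ξ x + smul ξ y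
  add_smul : ∀ ξ η x, smul (ξ + η) x = smul ξ x + smul η x
  nm : E → L0 P
  nm_nonneg : ∀ x, ∀ᵐ ω ∂P, 0 ≤ nm x ω
  nm_eq_zero_iff : ∀ x, nm x = 0 ↔ x = 0
  nm_smul : ∀ ξ x, ∀ᵐ ω ∂P, nm (smul ξ x) ω = |ξ ω| * nm x ω
  nm_add_le : ∀ x y, ∀ᵐ ω ∂P, nm (x + y) ω ≤ nm x ω + nm y ω

/-- The `𝒯_c`-neighbourhood filter of a point `r` of `L⁰(𝓕)`, with base the closed balls
`{s : |s - r| ≤ ε}`, `ε ∈ L⁰₊₊`. -/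
def cNhdsL0 (P : Measure Ω) (r : L0 P) : Filter (L0 P) :=
  ⨅ ε ∈ L0pp P, 𝓟 {s | ∀ᵐ ω ∂P, |s ω - r ω| ≤ ε ω}

namespace RNModule

variable {P : Measure Ω} {E : Type*} [AddCommGroup E] (N : RNModule P E)

/-- Convergence of sequences in the `(ε,λ)`-topology `𝒯_{ε,λ}` of an RN module. -/
def TendstoEL (x : ℕ → E) (a : E) : Prop :=
  ∀ ε : ℝ, 0 < ε → ∀ lam ∈ Ioo (0 : ℝ) 1, ∃ N' : ℕ, ∀ n ≥ N',
    ENNReal.ofReal (1 - lam) < P {ω | N.nm (x n - a) ω < ε}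

/-- Cauchy sequence for the `d_{ε,λ}`-uniformity of an RN module. -/
def CauchySeqEL (x : ℕ → E) : Prop :=
  ∀ ε : ℝ, 0 < ε → ∀ lam ∈ Ioo (0 : ℝ) 1, ∃ N' : ℕ, ∀ m ≥ N', ∀ n ≥ N',
    ENNReal.ofReal (1 - lam) < P {ω | N.nm (x m - x n) ω < ε}

/-- `𝒯_{ε,λ}`-completeness (the `d_{ε,λ}`-uniformity is metrizable, hence completeness is
equivalent to sequential completeness). -/
def CompleteEL : Prop := ∀ x : ℕ → E, N.CauchySeqEL x → ∃ a, N.TendstoEL x a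

/-- `G` is `𝒯_{ε,λ}`-closed (sequentially; `𝒯_{ε,λ}` is metrizable). -/
def ClosedEL (G : Set E) : Prop :=
  ∀ (x : ℕ → E) (a : E), (∀ n, x n ∈ G) → N.TendstoEL x a → a ∈ G

/-- `φ : G → L̄⁰(𝓕)` is `𝒯_{ε,λ}`-lower semicontinuous on `G`: its epigraph
`{(x,r) ∈ G × L⁰ : φ(x) ≤ r}` is closed in `(G,𝒯_{ε,λ}) × (L⁰(𝓕),𝒯_{ε,λ})`. -/
def LscELOn (φ : E → L0e P) (G : Set E) : Prop :=
  ∀ (x : ℕ → E) (r : ℕ → L0 P) (a : E) (s : L0 P),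
    (∀ n, x n ∈ G) → a ∈ G →
    (∀ n, ∀ᵐ ω ∂P, φ (x n) ω ≤ (r n ω : EReal)) →
    N.TendstoEL x a → TendstoProb P r s →
    ∀ᵐ ω ∂P, φ a ω ≤ (s ω : EReal)

/-- The neighbourhood filter of `x` in the locally `L⁰`-convex topology `𝒯_c`,
whose base consists of the closed balls `{y : ‖y - x‖ ≤ ε}`, `ε ∈ L⁰₊₊`. -/
def cNhds (x : E) : Filter E :=
  ⨅ ε ∈ L0pp P, 𝓟 {y | ∀ᵐ ω ∂P, N.nm (y - x) ω ≤ ε ω}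

/-- The `d_c`-uniformity of an RN module, with base `{U(ε) : ε ∈ L⁰₊₊}`,
`U(ε) = {(p,q) : ‖p - q‖ ≤ ε}`. -/
def cUniformity : Filter (E × E) :=
  ⨅ ε ∈ L0pp P, 𝓟 {p | ∀ᵐ ω ∂P, N.nm (p.1 - p.2) ω ≤ ε ω}

/-- `𝒯_c`-completeness: every Cauchy filter for the `d_c`-uniformity converges. -/
def cComplete : Prop :=
  ∀ F : Filter E, F.NeBot → F ×ˢ F ≤ N.cUniformity → ∃ x, F ≤ N.cNhds x

/-- The `𝒯_c`-closure of a subset. -/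
def cClosure (G : Set E) : Set E := {x | (N.cNhds x ⊓ 𝓟 G).NeBot}

/-- `G` is `𝒯_c`-closed. -/
def cClosed (G : Set E) : Prop := ∀ x, x ∈ N.cClosure G → x ∈ G

/-- `S` is `𝒯_c`-dense in `T`. -/
def cDenseIn (S T : Set E) : Prop := ∀ x ∈ T, x ∈ N.cClosure S

/-- The `𝒯_c`-boundary `∂_c G`. -/
def cBoundary (G : Set E) : Set E := N.cClosure G ∩ N.cClosure Gᶜ

/-- `φ : G → L̄⁰(𝓕)` is `𝒯_c`-lower semicontinuous on `G`: its epigraph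
`{(x,r) ∈ G × L⁰ : φ(x) ≤ r}` is closed in `(G,𝒯_c) × (L⁰(𝓕),𝒯_c)`. -/
def cLscOn (φ : E → L0e P) (G : Set E) : Prop :=
  ∀ (a : E) (s : L0 P), a ∈ G →
    ((N.cNhds a ×ˢ cNhdsL0 P s) ⊓
      𝓟 {p : E × L0 P | p.1 ∈ G ∧ ∀ᵐ ω ∂P, φ p.1 ω ≤ (p.2 ω : EReal)}).NeBot →
    ∀ᵐ ω ∂P, φ a ω ≤ (s ω : EReal)

/-- The countable concatenation property of a subset `G` of an RN module. -/
def HasCC (G : Set E) : Prop :=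
  ∀ (x : ℕ → E), (∀ n, x n ∈ G) →
    ∀ (A : ℕ → Set Ω) (hA : ∀ n, MeasurableSet (A n)),
      (∀ i j, i ≠ j → Disjoint (A i) (A j)) → (⋃ n, A n) = univ →
        ∃ y ∈ G, ∀ n, N.smul (indL0 P (A n) (hA n)) y = N.smul (indL0 P (A n) (hA n)) (x n)

/-- The countable concatenation property of a subset of the product `L⁰(𝓕)`-module
`E × L⁰(𝓕)` (with componentwise module operations). -/
def HasCCProd (G : Set (E × L0 P)) : Prop :=
  ∀ (p : ℕ → E × L0 P), (∀ n, p n ∈ G) →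
    ∀ (A : ℕ → Set Ω) (hA : ∀ n, MeasurableSet (A n)),
      (∀ i j, i ≠ j → Disjoint (A i) (A j)) → (⋃ n, A n) = univ →
        ∃ q ∈ G, ∀ n,
          N.smul (indL0 P (A n) (hA n)) q.1 = N.smul (indL0 P (A n) (hA n)) (p n).1 ∧
          indL0 P (A n) (hA n) * q.2 = indL0 P (A n) (hA n) * (p n).2

/-- The local property of an `L̄⁰(𝓕)`-valued function:
`Ĩ_A·φ(x) = Ĩ_A·φ(Ĩ_A·x)` for all `x ∈ E`, `A ∈ 𝓕`, i.e. `φ(x) = φ(Ĩ_A x)` a.s. on `A`. -/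
def LocalProp (φ : E → L0e P) : Prop :=
  ∀ (x : E) (A : Set Ω) (hA : MeasurableSet A),
    ∀ᵐ ω ∂P, ω ∈ A → φ x ω = φ (N.smul (indL0 P A hA) x) ω

/-- `G` is `L⁰(𝓕)`-convex. -/
def L0Convex (G : Set E) : Prop :=
  ∀ x ∈ G, ∀ y ∈ G, ∀ ξ η : L0 P,
    (∀ᵐ ω ∂P, 0 ≤ ξ ω) → (∀ᵐ ω ∂P, 0 ≤ η ω) → ξ + η = 1 →
      N.smul ξ x + N.smul η y ∈ G

/-- `G` is a.s. bounded: `⋁{‖p‖ : p ∈ G} ∈ L⁰₊(𝓕)`. -/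
def ASBounded (G : Set E) : Prop :=
  ∃ ξ : L0 P, ∀ p ∈ G, ∀ᵐ ω ∂P, N.nm p ω ≤ ξ ω

/-- Membership in the random conjugate space `E*`: `f` is an a.s. bounded random linear
functional, i.e. an `L⁰(𝓕)`-linear map `f : E → L⁰(𝓕)` with `|f(x)| ≤ ξ·‖x‖` for all `x`
for some `ξ ∈ L⁰₊(𝓕)`. -/
def IsDual (f : E → L0 P) : Prop :=
  (∀ x y, f (x + y) = f x + f y) ∧
  (∀ (ξ : L0 P) (x : E), f (N.smul ξ x) = ξ * f x) ∧
  ∃ ξ : L0 P, (∀ᵐ ω ∂P, 0 ≤ ξ ω) ∧ ∀ x, ∀ᵐ ω ∂P, |f x ω| ≤ ξ ω * N.nm x ω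

/-- `nf = ‖f‖* := ⋀{ξ ∈ L⁰₊ : |f(x)| ≤ ξ‖x‖ for all x ∈ E}`, the random norm of `E*`. -/
def IsDualNorm (f : E → L0 P) (nf : L0 P) : Prop :=
  (∀ ξ : L0 P, ((∀ᵐ ω ∂P, 0 ≤ ξ ω) ∧ ∀ x, ∀ᵐ ω ∂P, |f x ω| ≤ ξ ω * N.nm x ω) →
    ∀ᵐ ω ∂P, nf ω ≤ ξ ω) ∧
  (∀ c : L0 P,
    (∀ ξ : L0 P, ((∀ᵐ ω ∂P, 0 ≤ ξ ω) ∧ ∀ x, ∀ᵐ ω ∂P, |f x ω| ≤ ξ ω * N.nm x ω) →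
      ∀ᵐ ω ∂P, c ω ≤ ξ ω) → ∀ᵐ ω ∂P, c ω ≤ nf ω)

/-- The cone `K(f,k) = {y ∈ E : k‖y‖ ≤ f(y)}`. -/
def Kcone (f : E → L0 P) (k : L0 P) : Set E := {y | ∀ᵐ ω ∂P, k ω * N.nm y ω ≤ f y ω}

/-- `f ∈ E*∖{0}`, bounded from above on `G`, supports `G` at some point:
`f(x) = ⋁f(G)` for some `x ∈ G`. -/
def Supports (G : Set E) (f : E → L0 P) : Prop :=
  N.IsDual f ∧ f ≠ 0 ∧ (∃ ξ : L0 P, ∀ x ∈ G, ∀ᵐ ω ∂P, f x ω ≤ ξ ω) ∧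
    ∃ x ∈ G, IsSupOnR f G (f x)

/-- The set of support points of `G`: points `x ∈ G` at which some
`f ∈ E*∖{0}`, bounded from above on `G`, attains `f(x) = ⋁f(G)`. -/
def SupportPoints (G : Set E) : Set E :=
  {x | x ∈ G ∧ ∃ f : E → L0 P, N.IsDual f ∧ f ≠ 0 ∧
    (∃ ξ : L0 P, ∀ y ∈ G, ∀ᵐ ω ∂P, f y ω ≤ ξ ω) ∧ IsSupOnR f G (f x)}

end RNModule


/-
Cone maximality of `x₀` gives `f (x - x₀) ≤ k‖x - x₀‖` on `G`: on the event where this fails,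
splicing `x` with `x₀` produces a point of `G ∩ (K(f,k) + x₀)` other than `x₀`. Since `L⁰(𝓕)`
is a Dedekind complete ordered vector space, the Riesz extension argument works for
`L⁰`-valued maps and yields a real-linear `h ≤ k‖·‖` with `f ≤ h` on the cone generated by
`G - x₀`. The bound `|h| ≤ k‖·‖` makes `h` automatically `L⁰`-linear, and `g = f - h` attains
`⋁ g(G)` at `x₀` with `‖f - g‖* = ‖h‖* ≤ k`.
-/

namespace AEEqFun

variable {α : Type*} [MeasurableSpace α] {μ : Measure α}

theorem const_add (s t : ℝ) :
    (AEEqFun.const α (s + t) : α →ₘ[μ] ℝ) = AEEqFun.const α s + AEEqFun.const α t :=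
  (AEEqFun.mk_add_mk _ _ _ _).symm

theorem const_mul (s t : ℝ) :
    (AEEqFun.const α (s * t) : α →ₘ[μ] ℝ) = AEEqFun.const α s * AEEqFun.const α t :=
  (AEEqFun.mk_mul_mk _ _ _ _).symm

theorem const_mul_eq_smul (t : ℝ) (ξ : α →ₘ[μ] ℝ) : AEEqFun.const α t * ξ = t • ξ :=
  AEEqFun.induction_on ξ fun _ _ => by rw [AEEqFun.const, AEEqFun.mk_mul_mk, AEEqFun.smul_mk]; rfl

instance {β : Type*} [TopologicalSpace β] [AddCommMonoid β] [ContinuousAdd β] [PartialOrder β]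
    [IsOrderedAddMonoid β] : IsOrderedAddMonoid (α →ₘ[μ] β) where
  add_le_add_left a b hab c := by
    rw [← AEEqFun.coeFn_le] at hab ⊢
    filter_upwards [hab, AEEqFun.coeFn_add a c, AEEqFun.coeFn_add b c] with ω h hac hbc
    simpa only [hac, hbc, Pi.add_apply] using add_le_add_left h (c ω)

instance : PosSMulMono ℝ (α →ₘ[μ] ℝ) where
  smul_le_smul_of_nonneg_left t ht a b hab := by
    rw [← AEEqFun.coeFn_le] at hab ⊢
    filter_upwards [hab, AEEqFun.coeFn_smul t a, AEEqFun.coeFn_smul t b] with ω h hta htb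
    simpa only [hta, htb, Pi.smul_apply, smul_eq_mul] using mul_le_mul_of_nonneg_left h ht

theorem exists_isLUB_of_countable {S : Set (α →ₘ[μ] ℝ)} (hc : S.Countable) (hne : S.Nonempty)
    (hbdd : BddAbove S) : ∃ η, IsLUB S η := by
  obtain ⟨ζ, rfl⟩ := hc.exists_eq_range hne
  obtain ⟨b, hb⟩ := hbdd
  have hζb : ∀ᵐ ω ∂μ, ∀ n, ζ n ω ≤ b ω :=
    ae_all_iff.2 fun n => AEEqFun.coeFn_le.2 (hb ⟨n, rfl⟩)
  have hm : AEMeasurable (fun ω => ⨆ n, ζ n ω) μ := AEMeasurable.iSup fun n => (ζ n).aemeasurable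
  let η : α →ₘ[μ] ℝ := AEEqFun.mk _ hm.aestronglyMeasurable
  have hη : η =ᵐ[μ] fun ω => ⨆ n, ζ n ω := AEEqFun.coeFn_mk _ _
  refine ⟨η, ?_, fun c hc => ?_⟩
  · rintro _ ⟨n, rfl⟩
    rw [← AEEqFun.coeFn_le]
    filter_upwards [hζb, hη] with ω hω hη
    rw [hη]
    exact le_ciSup ⟨b ω, by rintro _ ⟨m, rfl⟩; exact hω m⟩ n
  · rw [← AEEqFun.coeFn_le]
    filter_upwards [ae_all_iff.2 fun n => AEEqFun.coeFn_le.2 (hc ⟨n, rfl⟩),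
      hη] with ω hω hη
    rw [hη]
    exact ciSup_le hω

variable [IsFiniteMeasure μ]

theorem integrable_arctan (ξ : α →ₘ[μ] ℝ) : Integrable (fun ω => Real.arctan (ξ ω)) μ := by
  refine Integrable.mono' (integrable_const (Real.pi / 2))
    (Real.continuous_arctan.comp_aestronglyMeasurable ξ.aestronglyMeasurable) ?_
  filter_upwards with ω
  rw [Real.norm_eq_abs, abs_le]
  exact ⟨(Real.neg_pi_div_two_lt_arctan _).le, (Real.arctan_lt_pi_div_two _).le⟩

theorem integral_arctan_mono {ξ η : α →ₘ[μ] ℝ} (h : ξ ≤ η) :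
    ∫ ω, Real.arctan (ξ ω) ∂μ ≤ ∫ ω, Real.arctan (η ω) ∂μ :=
  integral_mono_ae (integrable_arctan ξ) (integrable_arctan η) <|
    (AEEqFun.coeFn_le.2 h).mono fun _ hω => Real.arctan_strictMono.monotone hω

theorem eq_of_le_of_integral_arctan_le {ξ η : α →ₘ[μ] ℝ} (h : ξ ≤ η)
    (hJ : ∫ ω, Real.arctan (η ω) ∂μ ≤ ∫ ω, Real.arctan (ξ ω) ∂μ) : ξ = η := by
  have hnonneg : 0 ≤ᵐ[μ] fun ω => Real.arctan (η ω) - Real.arctan (ξ ω) :=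
    (AEEqFun.coeFn_le.2 h).mono fun _ hω => sub_nonneg.2 (Real.arctan_strictMono.monotone hω)
  have hzero := (integral_eq_zero_iff_of_nonneg_ae hnonneg
    ((integrable_arctan η).sub (integrable_arctan ξ))).1 <| by
      rw [integral_sub (integrable_arctan η) (integrable_arctan ξ)]
      exact le_antisymm (sub_nonpos.2 hJ) (sub_nonneg.2 (integral_arctan_mono h))
  refine AEEqFun.ext ?_
  filter_upwards [hzero] with ω hω
  exact Real.arctan_injective (sub_eq_zero.1 hω).symm

/- `ξ ↦ ∫ arctan ξ` is bounded and strictly monotone. The supremum `η` of a countable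
subfamily of `S` that maximizes it is already an upper bound of `S`: adjoining any `ξ ∈ S`
cannot increase the integral, so `ξ ⊔ η = η`. -/
theorem exists_isLUB {S : Set (α →ₘ[μ] ℝ)} (hne : S.Nonempty) (hbdd : BddAbove S) :
    ∃ η, IsLUB S η := by
  set J : (α →ₘ[μ] ℝ) → ℝ := fun ξ => ∫ ω, Real.arctan (ξ ω) ∂μ
  obtain ⟨b, hb⟩ := hbdd
  set R : Set ℝ := {r | ∃ T ⊆ S, T.Countable ∧ ∃ η, IsLUB T η ∧ J η = r}
  have hRbdd : BddAbove R := by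
    refine ⟨J b, ?_⟩
    rintro _ ⟨T, hTS, -, η, hη, rfl⟩
    exact integral_arctan_mono (hη.2 fun ξ hξ => hb (hTS hξ))
  obtain ⟨ξ₀, hξ₀⟩ := hne
  have hRne : R.Nonempty :=
    ⟨_, {ξ₀}, by simpa using hξ₀, countable_singleton _, ξ₀, isLUB_singleton, rfl⟩
  obtain ⟨u, -, hu, huR⟩ := exists_seq_tendsto_sSup hRne hRbdd
  choose T hTS hTc ηₙ hηₙ hJηₙ using huR
  have hJ : ∀ {T}, T ⊆ S → T.Countable → T.Nonempty → ∃ η, IsLUB T η ∧ J η ≤ sSup R := by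
    intro T hTS hTc hTne
    obtain ⟨η, hη⟩ := exists_isLUB_of_countable hTc hTne ⟨b, fun ξ hξ => hb (hTS hξ)⟩
    exact ⟨η, hη, le_csSup hRbdd ⟨T, hTS, hTc, η, hη, rfl⟩⟩
  have hUS : insert ξ₀ (⋃ n, T n) ⊆ S := insert_subset hξ₀ (iUnion_subset hTS)
  have hUc : (insert ξ₀ (⋃ n, T n)).Countable := (countable_iUnion hTc).insert ξ₀
  obtain ⟨η, hη, -⟩ := hJ hUS hUc (insert_nonempty _ _)
  have hJη : sSup R ≤ J η := by
    refine le_of_tendsto' hu fun n => ?_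
    rw [← hJηₙ n]
    exact integral_arctan_mono ((hηₙ n).2 fun ξ hξ =>
      hη.1 (mem_insert_of_mem _ (mem_iUnion_of_mem n hξ)))
  refine ⟨η, fun ξ hξ => ?_, fun c hc => hη.2 fun ζ hζ => hc (hUS hζ)⟩
  obtain ⟨η', hη', hJη'⟩ := hJ (insert_subset hξ hUS) (hUc.insert ξ) (insert_nonempty _ _)
  have hηη' : η ≤ η' := hη.2 fun ζ hζ => hη'.1 (mem_insert_of_mem _ hζ)
  rw [eq_of_le_of_integral_arctan_le hηη' (hJη'.trans hJη)]
  exact hη'.1 (mem_insert _ _)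

noncomputable instance : ConditionallyCompleteLattice (α →ₘ[μ] ℝ) := by
  classical
  letI : SupSet (α →ₘ[μ] ℝ) := ⟨fun S =>
    if h : S.Nonempty ∧ BddAbove S then (exists_isLUB h.1 h.2).choose else 0⟩
  exact conditionallyCompleteLatticeOfLatticeOfsSup _ fun S hS hne => by
    change IsLUB S (dite _ _ _)
    rw [dif_pos ⟨hne, hS⟩]
    exact (exists_isLUB hne hS).choose_spec

end AEEqFun

section RieszExtension

variable {E V : Type*} [AddCommGroup E] [Module ℝ E]
  [ConditionallyCompleteLattice V] [AddCommGroup V] [IsOrderedAddMonoid V] [Module ℝ V]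
  [PosSMulMono ℝ V]

theorem riesz_extension_step (s : PointedCone ℝ E) (f : E →ₗ.[ℝ] V)
    (nonneg : ∀ x : f.domain, (x : E) ∈ s → 0 ≤ f x)
    (dense : ∀ y, ∃ x : f.domain, (x : E) + y ∈ s) (y : E) :
    ∃ c : V, ∀ (x : f.domain) (t : ℝ), (x : E) + t • y ∈ s → 0 ≤ f x + t • c := by
  obtain ⟨c, hlow, hupp⟩ : (upperBounds ((fun x => -f x) '' {x : f.domain | (x : E) + y ∈ s}) ∩
      lowerBounds (f '' {x : f.domain | (x : E) - y ∈ s})).Nonempty := by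
    refine exists_between_of_forall_le (Nonempty.image _ (dense y)) ?_ ?_
    · obtain ⟨x, hx⟩ := dense (-y)
      exact ⟨_, x, by simpa [sub_eq_add_neg] using hx, rfl⟩
    · rintro _ ⟨x, hx, rfl⟩ _ ⟨x', hx', rfl⟩
      have := nonneg (x + x') (by simpa using s.add_mem hx hx')
      rwa [f.map_add, ← neg_le_iff_add_nonneg'] at this
  refine ⟨c, fun x t hxt => ?_⟩
  rcases lt_trichotomy t 0 with ht | rfl | ht
  · have hmem : (((-t)⁻¹ • x : f.domain) : E) - y ∈ s := by
      convert s.smul_mem (inv_nonneg.2 (neg_nonneg.2 ht.le)) hxt using 1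
      rw [Submodule.coe_smul, smul_add, smul_smul, show (-t)⁻¹ * t = -1 by field_simp [ht.ne],
        neg_one_smul, sub_eq_add_neg]
    have := smul_le_smul_of_nonneg_left (hupp ⟨_, hmem, rfl⟩) (neg_nonneg.2 ht.le)
    rw [f.map_smul, smul_smul, mul_inv_cancel₀ (neg_ne_zero.2 ht.ne), one_smul, neg_smul] at this
    exact neg_le_iff_add_nonneg.1 this
  · simpa using nonneg x (by simpa using hxt)
  · have hmem : ((t⁻¹ • x : f.domain) : E) + y ∈ s := by
      convert s.smul_mem (inv_nonneg.2 ht.le) hxt using 1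
      rw [Submodule.coe_smul, smul_add, smul_smul, inv_mul_cancel₀ ht.ne', one_smul]
    have := smul_le_smul_of_nonneg_left (hlow ⟨_, hmem, rfl⟩) ht.le
    dsimp only at this
    rw [f.map_smul, smul_neg, smul_smul, mul_inv_cancel₀ ht.ne', one_smul] at this
    exact neg_le_iff_add_nonneg'.1 this

theorem riesz_extension_of_conditionallyComplete (s : PointedCone ℝ E) (f : E →ₗ.[ℝ] V)
    (nonneg : ∀ x : f.domain, (x : E) ∈ s → 0 ≤ f x)
    (dense : ∀ y, ∃ x : f.domain, (x : E) + y ∈ s) :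
    ∃ g : E →ₗ[ℝ] V, (∀ x : f.domain, g x = f x) ∧ ∀ x ∈ s, 0 ≤ g x := by
  set S := {g : E →ₗ.[ℝ] V | ∀ x : g.domain, (x : E) ∈ s → 0 ≤ g x}
  have hchain : ∀ c ⊆ S, IsChain (· ≤ ·) c → ∀ g ∈ c, ∃ ub ∈ S, ∀ z ∈ c, z ≤ ub := by
    intro c hcS hc g hg
    refine ⟨LinearPMap.sSup c hc.directedOn, fun ⟨x, hx⟩ hxs => ?_,
      fun _ => LinearPMap.le_sSup hc.directedOn⟩
    obtain ⟨l, hl, hxl⟩ := (LinearPMap.mem_domain_sSup_iff ⟨g, hg⟩ hc.directedOn).1 hx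
    simpa only [LinearPMap.sSup_apply hc.directedOn hl ⟨x, hxl⟩] using hcS hl ⟨x, hxl⟩ hxs
  obtain ⟨q, hfq, hq⟩ := zorn_le_nonempty₀ S hchain f nonneg
  have htop : q.domain = ⊤ := by
    by_contra hne
    obtain ⟨y, -, hy⟩ := SetLike.exists_of_lt (lt_top_iff_ne_top.2 hne)
    obtain ⟨c, hc⟩ := riesz_extension_step s q hq.prop
      (fun z => let ⟨x, hx⟩ := dense z; ⟨⟨x, hfq.1 x.2⟩, hx⟩) y
    have hext : q.supSpanSingleton y c hy ∈ S := by
      rintro ⟨z, hz⟩ hzs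
      obtain ⟨x, hx, _, hyz, rfl⟩ := Submodule.mem_sup.1 hz
      obtain ⟨t, rfl⟩ := Submodule.mem_span_singleton.1 hyz
      rw [LinearPMap.supSpanSingleton_apply_mk _ _ _ _ _ hx]
      exact hc ⟨x, hx⟩ t hzs
    have hdom := LinearPMap.domain_mono.monotone (hq.2 hext (q.left_le_sup _ _))
    exact hy (hdom (Submodule.mem_sup_right (Submodule.mem_span_singleton_self y)))
  refine ⟨q.toFun.comp (LinearMap.id.codRestrict q.domain fun x => htop ▸ Submodule.mem_top),
    fun x => (hfq.2 rfl).symm, fun x hx => hq.prop _ hx⟩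

theorem exists_linearMap_between_of_le_on_pointedCone (p : E → V)
    (p_add : ∀ x y, p (x + y) ≤ p x + p y) (p_smul : ∀ t : ℝ, 0 ≤ t → ∀ x, p (t • x) = t • p x)
    (f : E →ₗ[ℝ] V) (C : PointedCone ℝ E) (hfp : ∀ c ∈ C, f c ≤ p c) :
    ∃ h : E →ₗ[ℝ] V, (∀ x, h x ≤ p x) ∧ ∀ c ∈ C, f c ≤ h c := by
  have p_zero : p 0 = 0 := by simpa using p_smul 0 le_rfl 0
  -- `s` is the epigraph of `y ↦ ⨅ c ∈ C, p (y + c) - f c`; a functional nonnegative on it and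
  -- equal to `v` at `(0, v)` has the form `(y, v) ↦ v - h y` with `h ≤ p` and `f ≤ h` on `C`.
  let s : PointedCone ℝ (E × V) :=
    { carrier := {z | ∃ c ∈ C, p (z.1 + c) ≤ z.2 + f c}
      add_mem' := by
        rintro z w ⟨c, hc, hz⟩ ⟨c', hc', hw⟩
        refine ⟨c + c', C.add_mem hc hc', ?_⟩
        calc p ((z + w).1 + (c + c')) = p ((z.1 + c) + (w.1 + c')) := by
              rw [Prod.fst_add, add_add_add_comm]
          _ ≤ (z.2 + f c) + (w.2 + f c') := (p_add _ _).trans (add_le_add hz hw)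
          _ = (z + w).2 + f (c + c') := by rw [Prod.snd_add, map_add, add_add_add_comm]
      zero_mem' := ⟨0, C.zero_mem, by simp [p_zero]⟩
      smul_mem' := by
        rintro ⟨t, ht⟩ z ⟨c, hc, hz⟩
        refine ⟨t • c, C.smul_mem ht hc, ?_⟩
        calc p ((t • z).1 + t • c) = t • p (z.1 + c) := by
              rw [← p_smul t ht]; simp [smul_add]
          _ ≤ t • (z.2 + f c) := smul_le_smul_of_nonneg_left hz ht
          _ = (t • z).2 + f (t • c) := by simp [smul_add] }
  let f₀ := (LinearMap.snd ℝ E V).toPMap (LinearMap.range (LinearMap.inr ℝ E V))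
  obtain ⟨g, hg, hgs⟩ := riesz_extension_of_conditionallyComplete s f₀
    (by
      rintro ⟨_, v, rfl⟩ ⟨c, hc, hz⟩
      have hz' : p c ≤ v + f c := by simpa using hz
      simpa [f₀] using (le_add_iff_nonneg_left _).1 ((hfp c hc).trans hz'))
    (fun z => ⟨⟨(0, p z.1 - z.2), p z.1 - z.2, rfl⟩, 0, C.zero_mem, by simp⟩)
  have hgv : ∀ x v, g (x, v) = g (x, 0) + v := fun x v => by
    have h0v : g (0, v) = v := hg ⟨(0, v), v, rfl⟩
    rw [show (x, v) = (x, 0) + (0, v) by simp, map_add, h0v]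
  refine ⟨-(g.comp (LinearMap.inl ℝ E V)), fun x => ?_, fun c hc => ?_⟩
  · have := hgs (x, p x) ⟨0, C.zero_mem, by simp⟩
    rw [hgv] at this
    exact neg_le_iff_add_nonneg'.2 this
  · have := hgs (-c, -f c) ⟨c, hc, by simp [p_zero]⟩
    rw [hgv, show ((-c, 0) : E × V) = -(c, 0) by simp, map_neg, ← neg_add, neg_nonneg] at this
    simpa [le_neg_iff_add_nonpos_left] using this

end RieszExtension

section Indicator

variable {P : Measure Ω} {A : Set Ω}

theorem indL0_ae_eq (hA : MeasurableSet A) : indL0 P A hA =ᵐ[P] A.indicator fun _ => (1 : ℝ) :=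
  AEEqFun.coeFn_mk _ _

theorem indL0_nonneg (hA : MeasurableSet A) : ∀ᵐ ω ∂P, 0 ≤ indL0 P A hA ω :=
  (indL0_ae_eq hA).mono fun _ h => h ▸ Set.indicator_nonneg (fun _ _ => zero_le_one) _

theorem indL0_add_indL0_compl (hA : MeasurableSet A) : indL0 P A hA + indL0 P Aᶜ hA.compl = 1 := by
  rw [indL0, indL0, AEEqFun.mk_add_mk]
  simp only [Set.indicator_self_add_compl]
  rfl

end Indicator

theorem eq_zero_of_forall_rat_abs_le_mul {a B x : ℝ} (h : ∀ q : ℚ, |a| ≤ B * |x - q|) :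
    a = 0 := by
  have : |a| ≤ B * |x - x| := Rat.denseRange_cast.induction_on (p := fun y => |a| ≤ B * |x - y|)
    x (isClosed_le continuous_const (by fun_prop)) h
  simpa using this

namespace RNModule

variable {P : Measure Ω} {E : Type*} [AddCommGroup E] (N : RNModule P E)

theorem smul_zero (ξ : L0 P) : N.smul ξ 0 = 0 := by
  simpa using N.smul_add ξ 0 0

theorem zero_smul (x : E) : N.smul 0 x = 0 := by
  simpa using N.add_smul 0 0 x

theorem smul_sub (ξ : L0 P) (x y : E) : N.smul ξ (x - y) = N.smul ξ x - N.smul ξ y :=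
  eq_sub_of_add_eq (by rw [← N.smul_add, sub_add_cancel])

noncomputable abbrev toModule : Module ℝ E where
  smul t x := N.smul (AEEqFun.const Ω t) x
  one_smul := N.one_smul
  mul_smul s t x := by
    change N.smul _ x = N.smul _ (N.smul _ x)
    rw [AEEqFun.const_mul, N.mul_smul]
  smul_zero _ := N.smul_zero _
  smul_add _ := N.smul_add _
  add_smul s t x := by
    change N.smul _ x = N.smul _ x + N.smul _ x
    rw [AEEqFun.const_add, N.add_smul]
  zero_smul := N.zero_smul

theorem nm_const_smul (t : ℝ) (x : E) :
    ∀ᵐ ω ∂P, N.nm (N.smul (AEEqFun.const Ω t) x) ω = |t| * N.nm x ω := by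
  filter_upwards [N.nm_smul (AEEqFun.const Ω t) x, AEEqFun.coeFn_const (μ := P) Ω t]
    with ω h hc
  rw [h, hc, Function.const_apply]

theorem nm_neg (x : E) : ∀ᵐ ω ∂P, N.nm (-x) ω = N.nm x ω := by
  let _ := N.toModule
  filter_upwards [N.nm_const_smul (-1) x] with ω h
  rw [← neg_one_smul ℝ x]
  exact h.trans (by rw [abs_neg, abs_one, one_mul])

variable {N}

theorem IsDual.map_sub {f : E → L0 P} (hf : N.IsDual f) (x y : E) : f (x - y) = f x - f y :=
  (AddMonoidHom.mk' f hf.1).map_sub x y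

theorem IsDual.sub {f g : E → L0 P} (hf : N.IsDual f) (hg : N.IsDual g) :
    N.IsDual fun x => f x - g x := by
  obtain ⟨hfadd, hfsmul, ξ, hξ, hfξ⟩ := hf
  obtain ⟨hgadd, hgsmul, η, hη, hgη⟩ := hg
  refine ⟨fun x y => by dsimp only; rw [hfadd, hgadd]; abel, fun ζ x => ?_, ξ + η, ?_, fun x => ?_⟩
  · dsimp only
    rw [hfsmul, hgsmul]
    refine AEEqFun.ext ?_
    filter_upwards [AEEqFun.coeFn_sub (ζ * f x) (ζ * g x), AEEqFun.coeFn_mul ζ (f x - g x),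
      AEEqFun.coeFn_mul ζ (f x), AEEqFun.coeFn_mul ζ (g x), AEEqFun.coeFn_sub (f x) (g x)]
      with ω h₁ h₂ h₃ h₄ h₅
    simp only [h₁, h₂, h₃, h₄, h₅, Pi.sub_apply, Pi.mul_apply, mul_sub]
  · filter_upwards [hξ, hη, AEEqFun.coeFn_add ξ η] with ω h₁ h₂ h₃
    simp only [h₃, Pi.add_apply]
    positivity
  · filter_upwards [hfξ x, hgη x, AEEqFun.coeFn_add ξ η, AEEqFun.coeFn_sub (f x) (g x)]
      with ω h₁ h₂ h₃ h₄
    simp only [h₃, h₄, Pi.add_apply, Pi.sub_apply, add_mul]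
    exact (abs_sub _ _).trans (add_le_add h₁ h₂)

theorem IsDual.exists_isDualNorm [IsFiniteMeasure P] {g : E → L0 P} (hg : N.IsDual g) :
    ∃ nf, N.IsDualNorm g nf := by
  set A := {ξ : L0 P | (∀ᵐ ω ∂P, 0 ≤ ξ ω) ∧ ∀ x, ∀ᵐ ω ∂P, |g x ω| ≤ ξ ω * N.nm x ω}
  have hbdd : BddBelow A := ⟨0, fun ξ hξ => AEEqFun.coeFn_le.1 <| by
    filter_upwards [hξ.1, AEEqFun.coeFn_zero (μ := P) (β := ℝ)] with ω h h0
    rwa [h0]⟩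
  exact ⟨sInf A, fun ξ hξ => AEEqFun.coeFn_le.2 (csInf_le hbdd hξ),
    fun c hc => AEEqFun.coeFn_le.2 (le_csInf hg.2.2 fun ξ hξ => AEEqFun.coeFn_le.1 (hc ξ hξ))⟩

theorem L0Convex.smul_indL0_sub_add_mem {G : Set E} (hG : N.L0Convex G) {x y : E} (hx : x ∈ G)
    (hy : y ∈ G) {A : Set Ω} (hA : MeasurableSet A) :
    N.smul (indL0 P A hA) (x - y) + y ∈ G := by
  set e := indL0 P A hA
  set e' := indL0 P Aᶜ hA.compl
  have hsplit : N.smul e y + N.smul e' y = y := by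
    rw [← N.add_smul, indL0_add_indL0_compl, N.one_smul]
  convert hG x hx y hy e e' (indL0_nonneg hA) (indL0_nonneg hA.compl)
    (indL0_add_indL0_compl hA) using 1
  calc N.smul e (x - y) + y = N.smul e x - N.smul e y + (N.smul e y + N.smul e' y) := by
        rw [N.smul_sub, hsplit]
    _ = N.smul e x + N.smul e' y := by abel

variable (N)

theorem map_smul_eq_mul_of_abs_le {h : E → L0 P} (hadd : ∀ x y, h (x + y) = h x + h y)
    (hreal : ∀ (t : ℝ) x, h (N.smul (AEEqFun.const Ω t) x) = t • h x) {k : L0 P}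
    (hbd : ∀ y, ∀ᵐ ω ∂P, |h y ω| ≤ k ω * N.nm y ω) (ξ : L0 P) (y : E) :
    h (N.smul ξ y) = ξ * h y := by
  have happrox : ∀ q : ℚ, ∀ᵐ ω ∂P,
      |h (N.smul ξ y) ω - ξ ω * h y ω| ≤ 2 * (k ω * N.nm y ω) * |ξ ω - q| := by
    intro q
    set c : L0 P := AEEqFun.const Ω (q : ℝ)
    have hsplit : h (N.smul ξ y) = h (N.smul (ξ - c) y) + (q : ℝ) • h y := by
      rw [← hreal, ← hadd, ← N.add_smul, sub_add_cancel]
    rw [hsplit]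
    filter_upwards [hbd (N.smul (ξ - c) y), hbd y, N.nm_smul (ξ - c) y, AEEqFun.coeFn_sub ξ c,
      AEEqFun.coeFn_const (μ := P) Ω (q : ℝ), AEEqFun.coeFn_add (h (N.smul (ξ - c) y)) _,
      AEEqFun.coeFn_smul (q : ℝ) (h y)] with ω h₁ h₂ h₃ h₄ h₅ h₆ h₇
    rw [h₃, h₄, Pi.sub_apply, h₅, Function.const_apply] at h₁
    rw [h₆, Pi.add_apply, h₇, Pi.smul_apply, smul_eq_mul]
    calc |h (N.smul (ξ - c) y) ω + q * h y ω - ξ ω * h y ω|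
        = |h (N.smul (ξ - c) y) ω - (ξ ω - q) * h y ω| := by ring_nf
      _ ≤ |h (N.smul (ξ - c) y) ω| + |ξ ω - q| * |h y ω| := by
        rw [← abs_mul]; exact abs_sub _ _
      _ ≤ k ω * (|ξ ω - q| * N.nm y ω) + |ξ ω - q| * (k ω * N.nm y ω) :=
        add_le_add h₁ (mul_le_mul_of_nonneg_left h₂ (abs_nonneg _))
      _ = 2 * (k ω * N.nm y ω) * |ξ ω - q| := by ring
  refine AEEqFun.ext ?_
  filter_upwards [ae_all_iff.2 happrox, AEEqFun.coeFn_mul ξ (h y)] with ω hω hm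
  rw [hm]
  exact sub_eq_zero.1 (eq_zero_of_forall_rat_abs_le_mul hω)

theorem le_of_inter_Kcone_add_eq_singleton {f : E → L0 P} (hf : N.IsDual f) {k : L0 P}
    {G : Set E} (hG : N.L0Convex G) {x₀ : E} (hx₀G : x₀ ∈ G)
    (hx₀ : G ∩ ((fun y => y + x₀) '' N.Kcone f k) = {x₀}) {x : E} (hx : x ∈ G) :
    ∀ᵐ ω ∂P, f (x - x₀) ω ≤ k ω * N.nm (x - x₀) ω := by
  set c := x - x₀
  set B := {ω | k ω * N.nm c ω < f c ω}
  have hB : MeasurableSet B :=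
    measurableSet_lt (k.measurable.mul (N.nm c).measurable) (f c).measurable
  set e := indL0 P B hB
  -- Splicing `x` on `B` with `x₀` off `B` gives a point of `G ∩ (K(f,k) + x₀)`, hence `x₀`:
  -- so `‖x - x₀‖ = 0` on `B`, which is incompatible with `k‖x - x₀‖ < f (x - x₀)`.
  have hcone : N.smul e c ∈ N.Kcone f k := by
    change ∀ᵐ ω ∂P, k ω * N.nm (N.smul e c) ω ≤ f (N.smul e c) ω
    rw [hf.2.1]
    filter_upwards [N.nm_smul e c, AEEqFun.coeFn_mul e (f c), indL0_ae_eq hB] with ω h₁ h₂ h₃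
    rw [h₁, h₂, Pi.mul_apply, h₃]
    by_cases hω : ω ∈ B
    · simpa [hω] using le_of_lt hω
    · simp [hω]
  have hzero : N.smul e c = 0 := by
    have : N.smul e c + x₀ ∈ ({x₀} : Set E) :=
      hx₀ ▸ ⟨hG.smul_indL0_sub_add_mem hx hx₀G hB, _, hcone, rfl⟩
    simpa using this
  obtain ⟨-, -, ξ, -, hξ⟩ := hf
  filter_upwards [N.nm_smul e c, indL0_ae_eq hB, hξ c,
    AEEqFun.coeFn_zero (μ := P) (β := ℝ)] with ω h₁ h₂ h₃ h₀
  by_contra hω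
  rw [hzero, (N.nm_eq_zero_iff 0).2 rfl, h₀, Pi.zero_apply, h₂,
    Set.indicator_of_mem (show ω ∈ B from not_le.1 hω)] at h₁
  have hc : N.nm c ω = 0 := by simpa using h₁.symm
  rw [hc, mul_zero, abs_nonpos_iff] at h₃
  rw [hc, h₃, mul_zero] at hω
  exact hω le_rfl

variable {k : L0 P}

theorem mul_nm_add_le (hk : ∀ᵐ ω ∂P, 0 ≤ k ω) (x y : E) :
    k * N.nm (x + y) ≤ k * N.nm x + k * N.nm y := by
  rw [← AEEqFun.coeFn_le]
  filter_upwards [hk, N.nm_add_le x y, AEEqFun.coeFn_mul k (N.nm (x + y)),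
    AEEqFun.coeFn_add (k * N.nm x) (k * N.nm y), AEEqFun.coeFn_mul k (N.nm x),
    AEEqFun.coeFn_mul k (N.nm y)] with ω hkω h h₁ h₂ h₃ h₄
  simp only [h₁, h₂, h₃, h₄, Pi.add_apply, Pi.mul_apply, ← mul_add]
  exact mul_le_mul_of_nonneg_left h hkω

theorem mul_nm_const_smul {t : ℝ} (ht : 0 ≤ t) (x : E) :
    k * N.nm (N.smul (AEEqFun.const Ω t) x) = t • (k * N.nm x) := by
  refine AEEqFun.ext ?_
  filter_upwards [N.nm_const_smul t x, AEEqFun.coeFn_mul k (N.nm (N.smul (AEEqFun.const Ω t) x)),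
    AEEqFun.coeFn_smul t (k * N.nm x), AEEqFun.coeFn_mul k (N.nm x)] with ω h h₁ h₂ h₃
  simp only [h₁, h₂, h₃, h, Pi.mul_apply, Pi.smul_apply, smul_eq_mul, abs_of_nonneg ht]
  ring

variable [IsFiniteMeasure P]

theorem exists_isDual_abs_le_of_le_on_sub {f : E → L0 P} (hf : N.IsDual f) (hk : ∀ᵐ ω ∂P, 0 ≤ k ω)
    {G : Set E} (hG : N.L0Convex G) {x₀ : E} (hx₀G : x₀ ∈ G)
    (hfG : ∀ x ∈ G, ∀ᵐ ω ∂P, f (x - x₀) ω ≤ k ω * N.nm (x - x₀) ω) :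
    ∃ h : E → L0 P, N.IsDual h ∧ (∀ y, ∀ᵐ ω ∂P, |h y ω| ≤ k ω * N.nm y ω) ∧
      ∀ x ∈ G, ∀ᵐ ω ∂P, f (x - x₀) ω ≤ h (x - x₀) ω := by
  let _ := N.toModule
  let fL : E →ₗ[ℝ] L0 P :=
    { toFun := f
      map_add' := hf.1
      map_smul' := fun t x => (hf.2.1 _ x).trans (AEEqFun.const_mul_eq_smul t (f x)) }
  have hGconv : Convex ℝ G := fun x hx y hy a b ha hb hab =>
    hG x hx y hy _ _ (AEEqFun.coeFn_const Ω a |>.mono fun _ h => h ▸ ha)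
      (AEEqFun.coeFn_const Ω b |>.mono fun _ h => h ▸ hb) (by rw [← AEEqFun.const_add, hab]; rfl)
  set D := (fun x => -x₀ + x) '' G
  have hD : Convex ℝ D := hGconv.translate (-x₀)
  have hGC : ∀ x ∈ G, x - x₀ ∈ ConvexCone.hull ℝ D := fun x hx =>
    ConvexCone.subset_hull ⟨x, hx, neg_add_eq_sub x₀ x⟩
  let C := (ConvexCone.hull ℝ D).toPointedCone (by simpa [ConvexCone.Pointed] using hGC x₀ hx₀G)
  have hfC : ∀ c ∈ C, fL c ≤ k * N.nm c := by
    intro c hc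
    obtain ⟨r, hr, _, ⟨x, hx, rfl⟩, rfl⟩ := (ConvexCone.mem_hull_of_convex hD).1 hc
    dsimp only
    rw [map_smul, neg_add_eq_sub]
    refine (smul_le_smul_of_nonneg_left (AEEqFun.coeFn_le.1 ?_) hr.le).trans_eq
      (N.mul_nm_const_smul hr.le _).symm
    filter_upwards [hfG x hx, AEEqFun.coeFn_mul k (N.nm (x - x₀))] with ω h h'
    rwa [h']
  obtain ⟨h, hhp, hfh⟩ := exists_linearMap_between_of_le_on_pointedCone (fun y => k * N.nm y)
    (N.mul_nm_add_le hk) (fun t ht => N.mul_nm_const_smul ht) fL C hfC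
  have hbd : ∀ y, ∀ᵐ ω ∂P, |h y ω| ≤ k ω * N.nm y ω := fun y => by
    filter_upwards [AEEqFun.coeFn_le.2 (hhp y), AEEqFun.coeFn_le.2 (hhp (-y)),
      AEEqFun.coeFn_mul k (N.nm y), AEEqFun.coeFn_mul k (N.nm (-y)), N.nm_neg y,
      AEEqFun.coeFn_neg (h y)] with ω h₁ h₂ h₃ h₄ h₅ h₆
    rw [map_neg, h₆, h₄, Pi.mul_apply, h₅, Pi.neg_apply] at h₂
    rw [h₃, Pi.mul_apply] at h₁
    exact abs_le.2 ⟨by linarith, h₁⟩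
  exact ⟨h, ⟨map_add h, N.map_smul_eq_mul_of_abs_le (map_add h) (map_smul h) hbd, k, hk, hbd⟩,
    hbd, fun x hx => AEEqFun.coeFn_le.2 (hfh _ (hGC x hx))⟩

end RNModule

theorem exists_support_functional_of_cone_maximal_general
    {Ω : Type*} [MeasurableSpace Ω] {P : Measure Ω} [IsProbabilityMeasure P]
    {E : Type*} [AddCommGroup E] (N : RNModule P E)
    (k : L0 P) (hk : k ∈ L0pp P)
    (f : E → L0 P) (hf : N.IsDual f)
    (G : Set E) (hGconv : N.L0Convex G)
    (x₀ : E) (hx₀G : x₀ ∈ G)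
    (hx₀ : G ∩ ((fun y => y + x₀) '' N.Kcone f k) = {x₀}) :
    ∃ g : E → L0 P, N.IsDual g ∧ IsSupOnR g G (g x₀) ∧
      ∃ nfg : L0 P, N.IsDualNorm (fun x => f x - g x) nfg ∧ ∀ᵐ ω ∂P, nfg ω ≤ k ω := by
  have hk₀ : ∀ᵐ ω ∂P, 0 ≤ k ω := by
    filter_upwards [show ∀ᵐ ω ∂P, 0 < k ω from hk] with ω hω using hω.le
  obtain ⟨h, hh, hhk, hfh⟩ := N.exists_isDual_abs_le_of_le_on_sub hf hk₀ hGconv hx₀G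
    fun x hx => N.le_of_inter_Kcone_add_eq_singleton hf hGconv hx₀G hx₀ hx
  obtain ⟨nf, hnf⟩ := hh.exists_isDualNorm
  have hsup : ∀ x ∈ G, f x - h x ≤ f x₀ - h x₀ := fun x hx => by
    have := AEEqFun.coeFn_le.1 (hfh x hx)
    rw [hf.map_sub, hh.map_sub, sub_le_sub_iff] at this
    rwa [sub_le_sub_iff, add_comm (f x₀)]
  refine ⟨fun x => f x - h x, hf.sub hh,
    ⟨fun x hx => AEEqFun.coeFn_le.2 (hsup x hx), fun c hc => hc x₀ hx₀G⟩, nf, ?_,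
    hnf.1 k ⟨hk₀, hhk⟩⟩
  convert hnf using 1
  exact funext fun x => sub_sub_cancel (f x) (h x)

/-- Lemma 4.12. If `x₀ ∈ G` satisfies `G ∩ (K(f,k) + x₀) = {x₀}`, with
`G` an `L⁰(𝓕)`-convex subset with the countable concatenation property, then there is
`g ∈ E*` with `⋁g(G) = g(x₀)` and `‖f - g‖* ≤ k`. -/
theorem exists_support_functional_of_cone_maximal
    {Ω : Type*} [MeasurableSpace Ω] {P : Measure Ω} [IsProbabilityMeasure P]
    {E : Type*} [AddCommGroup E] (N : RNModule P E)
    (hCCE : N.HasCC Set.univ)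
    (k : L0 P) (hk : k ∈ L0pp P)
    (f : E → L0 P) (hf : N.IsDual f)
    (G : Set E) (hGconv : N.L0Convex G) (hGCC : N.HasCC G)
    (x₀ : E) (hx₀G : x₀ ∈ G)
    (hx₀ : G ∩ ((fun y => y + x₀) '' N.Kcone f k) = {x₀}) :
    ∃ g : E → L0 P, N.IsDual g ∧ IsSupOnR g G (g x₀) ∧
      ∃ nfg : L0 P, N.IsDualNorm (fun x => f x - g x) nfg ∧ ∀ᵐ ω ∂P, nfg ω ≤ k ω :=
  exists_support_functional_of_cone_maximal_general N k hk f hf G hGconv x₀ hx₀G hx₀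

end GYY
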